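/- arXiv:2307.08129 — 3 statements merged into one kernel-verified Lean document; each statement's English description precedes it below -/
import Mathlib

section
/- Let p₁, …, pₙ be mutually orthogonal self-adjoint projections in M_d(ℂ) summing to the identity, let x ∈ M_d(ℂ), and let U = Σ_j e^{2πij/n} p_j. Then (1/n) Σ_{k=1}^{n} ‖U^k x U^{-k} − x‖₂² = Σ_{j=1}^{n} ‖[p_j, x]‖₂², where ‖·‖₂ is the Hilbert–Schmidt norm and [a,b] = ab − ba. -/
open Matrix

/-- Hilbert-Schmidt norm of a complex matrix. -/
noncomputable def hsNorm {d : ℕ} (z : Matrix (Fin d) (Fin d) ℂ) : ℝ :=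
  Real.sqrt ((Matrix.trace (zᴴ * z)).re)

/-!
Write `x = ∑_{j,l} p_j x p_l`. The blocks `p_j x p_l` are pairwise orthogonal for the trace
form, so the squared Hilbert–Schmidt norm of `∑ c_{jl} • p_j x p_l` is
`∑ |c_{jl}|² ‖p_j x p_l‖₂²`. Conjugation by `U^k` multiplies the block `(j, l)` by `w^k`, where
`w = ζ_j ζ̄_l` is an `n`-th root of unity equal to `1` exactly when `j = l`; averaging `|w^k - 1|²`
over `k` gives `2` off the diagonal and `0` on it, by orthogonality of characters. The block
coefficients of `[p_j, x]` are `δ_{ij} - δ_{lj}`, whose squares summed over `j` give the same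
weights, so both sides equal `2 ∑_{j ≠ l} ‖p_j x p_l‖₂²`.
-/

open Finset ComplexConjugate

section Idempotents

variable {ι A : Type*} [Fintype ι] [Semiring A] {e : ι → A}

theorem sum_mul_mul_eq_self (he : ∑ i, e i = 1) (x : A) :
    ∑ q : ι × ι, e q.1 * x * e q.2 = x := by
  simp only [Fintype.sum_prod_type, ← mul_sum, ← sum_mul, he, one_mul, mul_one]

variable {R : Type*} [CommSemiring R] [Algebra R A]

variable (e) in
theorem sum_smul_mul_mul_sum_smul (x : A) (c c' : ι → R) :
    (∑ i, c i • e i) * x * (∑ i, c' i • e i) =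
      ∑ q : ι × ι, (c q.1 * c' q.2) • (e q.1 * x * e q.2) := by
  simp only [sum_mul, mul_sum, Fintype.sum_prod_type]
  simp only [smul_mul_assoc, mul_smul_comm, smul_smul]
  rw [sum_comm]
  simp only [mul_comm (c' _)]

theorem OrthogonalIdempotents.sum_smul_mul_sum_smul (he : OrthogonalIdempotents e)
    (c c' : ι → R) : (∑ i, c i • e i) * (∑ i, c' i • e i) = ∑ i, (c i * c' i) • e i := by
  classical
  simp only [sum_mul_sum, smul_mul_smul_comm, he.mul_eq, smul_ite, smul_zero, sum_ite_eq,
    mem_univ, if_true]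

theorem CompleteOrthogonalIdempotents.sum_smul_pow (he : CompleteOrthogonalIdempotents e)
    (c : ι → R) (k : ℕ) : (∑ i, c i • e i) ^ k = ∑ i, c i ^ k • e i := by
  induction k with
  | zero => simp [he.complete]
  | succ k ih => simp only [pow_succ, ih, he.sum_smul_mul_sum_smul]

end Idempotents

section Commutator

variable {R A ι : Type*} [CommRing R] [Ring A] [Algebra R A] [Fintype ι] [DecidableEq ι]
  {e : ι → A}

theorem mul_sub_mul_eq_sum_smul (he : ∑ i, e i = 1) (j : ι) (x : A) :
    e j * x - x * e j = ∑ q : ι × ι,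
      ((if q.1 = j then 1 else 0) - (if q.2 = j then 1 else 0) : R) • (e q.1 * x * e q.2) := by
  have hδ : ∑ i, (if i = j then (1 : R) else 0) • e i = e j := by simp [ite_smul]
  have h1 : ∑ i, (1 : R) • e i = 1 := by simpa using he
  calc e j * x - x * e j
      = (∑ i, (if i = j then (1 : R) else 0) • e i) * x * (∑ i, (1 : R) • e i) -
          (∑ i, (1 : R) • e i) * x * (∑ i, (if i = j then (1 : R) else 0) • e i) := by
        rw [hδ, h1, mul_one, one_mul]
    _ = _ := by
        rw [sum_smul_mul_mul_sum_smul, sum_smul_mul_mul_sum_smul, ← sum_sub_distrib]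
        simp only [sub_smul, mul_one, one_mul]

end Commutator

section TraceForm

variable {m R : Type*} [Fintype m] [CommSemiring R] [StarRing R]

theorem trace_conjTranspose_sum_smul_mul_sum_smul {κ : Type*} [Fintype κ] {B : κ → Matrix m m R}
    (hB : Pairwise fun q r => trace ((B q)ᴴ * B r) = 0) (c : κ → R) :
    trace ((∑ q, c q • B q)ᴴ * ∑ q, c q • B q) =
      ∑ q, star (c q) * c q * trace ((B q)ᴴ * B q) := by
  simp only [conjTranspose_sum, conjTranspose_smul, sum_mul_sum, smul_mul_smul_comm, trace_sum,
    trace_smul, smul_eq_mul]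
  exact sum_congr rfl fun q _ =>
    sum_eq_single q (fun r _ hrq => by rw [hB hrq.symm, mul_zero]) (by simp)

theorem pairwise_trace_conjTranspose_mul_eq_zero {ι : Type*} {e : ι → Matrix m m R}
    (hsa : ∀ i, (e i)ᴴ = e i) (he : Pairwise (e · * e · = 0)) (x : Matrix m m R) :
    Pairwise fun q r : ι × ι => trace ((e q.1 * x * e q.2)ᴴ * (e r.1 * x * e r.2)) = 0 := by
  rintro ⟨a, b⟩ ⟨a', b'⟩ h
  have hmul : (e a * x * e b)ᴴ * (e a' * x * e b') = e b * (xᴴ * e a * e a' * x) * e b' := by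
    simp only [conjTranspose_mul, hsa, mul_assoc]
  rw [hmul]
  by_cases ha : a = a'
  · have hb : b' ≠ b := fun hb => h (by rw [ha, hb])
    rw [trace_mul_comm, ← mul_assoc, he hb, zero_mul, trace_zero]
  · simp only [mul_assoc xᴴ, he ha, mul_zero, zero_mul, trace_zero]

end TraceForm

section HilbertSchmidt

variable {d : ℕ}

theorem hsNorm_sq (z : Matrix (Fin d) (Fin d) ℂ) : hsNorm z ^ 2 = (trace (zᴴ * z)).re := by
  open ComplexOrder in
  exact Real.sq_sqrt (Complex.nonneg_iff.1 (posSemidef_conjTranspose_mul_self z).trace_nonneg).1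

theorem hsNorm_sum_smul_sq {κ : Type*} [Fintype κ] {B : κ → Matrix (Fin d) (Fin d) ℂ}
    (hB : Pairwise fun q r => trace ((B q)ᴴ * B r) = 0) (c : κ → ℂ) :
    hsNorm (∑ q, c q • B q) ^ 2 = ∑ q, ‖c q‖ ^ 2 * hsNorm (B q) ^ 2 := by
  simp only [hsNorm_sq, trace_conjTranspose_sum_smul_mul_sum_smul hB, Complex.re_sum,
    Complex.star_def, Complex.conj_mul', ← Complex.ofReal_pow, Complex.re_ofReal_mul]

end HilbertSchmidt

section RootsOfUnity

theorem sum_Icc_pow_eq_zero {K : Type*} [DivisionRing K] {w : K} {n : ℕ} (hw : w ^ n = 1)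
    (hw1 : w ≠ 1) : ∑ k ∈ Icc 1 n, w ^ k = 0 := by
  rw [← Ico_add_one_right_eq_Icc, sum_Ico_eq_sum_range, add_tsub_cancel_right]
  simp only [pow_add, pow_one, ← mul_sum, geom_sum_eq hw1, hw, sub_self, zero_div, mul_zero]

theorem sum_Icc_norm_pow_sub_one_sq {w : ℂ} {n : ℕ} (hn : n ≠ 0) (hw : w ^ n = 1)
    (hw1 : w ≠ 1) : ∑ k ∈ Icc 1 n, ‖w ^ k - 1‖ ^ 2 = 2 * n := by
  have hterm : ∀ k, ‖w ^ k - 1‖ ^ 2 = 2 - 2 * (w ^ k).re := fun k => by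
    rw [Complex.sq_norm, Complex.normSq_sub, Complex.normSq_eq_norm_sq, norm_pow,
      Complex.norm_eq_one_of_pow_eq_one hw hn]
    simp only [map_one, mul_one]
    ring
  rw [sum_congr rfl fun k _ => hterm k, sum_sub_distrib, ← mul_sum, ← Complex.re_sum,
    sum_Icc_pow_eq_zero hw hw1]
  simp [mul_comm]

theorem inv_mul_sum_Icc_norm_pow_sub_one_sq {w : ℂ} {n : ℕ} (hn : n ≠ 0) (hw : w ^ n = 1) :
    (1 / n : ℝ) * ∑ k ∈ Icc 1 n, ‖w ^ k - 1‖ ^ 2 = if w = 1 then 0 else 2 := by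
  split_ifs with hw1
  · simp [hw1]
  · rw [sum_Icc_norm_pow_sub_one_sq hn hw hw1]
    field_simp

theorem mul_conj_pow_eq_one {u v : ℂ} {n : ℕ} (hu : u ^ n = 1) (hv : v ^ n = 1) :
    (u * conj v) ^ n = 1 := by
  rw [mul_pow, ← map_pow, hu, hv, map_one, one_mul]

theorem mul_conj_eq_one_iff {u v : ℂ} (hv : ‖v‖ = 1) : u * conj v = 1 ↔ u = v := by
  rw [← Complex.inv_eq_conj hv, mul_inv_eq_one₀ (norm_ne_zero_iff.1 (by simp [hv]))]

theorem sum_norm_ite_sub_ite_sq {ι : Type*} [Fintype ι] [DecidableEq ι] (a b : ι) :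
    ∑ j, ‖(if a = j then 1 else 0 : ℂ) - if b = j then 1 else 0‖ ^ 2 = if a = b then 0 else 2 := by
  split_ifs with hab
  · simp [hab]
  · have hterm : ∀ j, ‖(if a = j then 1 else 0 : ℂ) - if b = j then 1 else 0‖ ^ 2 =
        (if a = j then 1 else 0) + (if b = j then 1 else 0) := fun j => by
      by_cases ha : a = j <;> by_cases hb : b = j
      · exact absurd (ha.trans hb.symm) hab
      all_goals simp [ha, hb]
    simp only [hterm, sum_add_distrib, sum_ite_eq, mem_univ, if_true]
    norm_num

end RootsOfUnity

section Projections

variable {d : ℕ} {ι : Type*} [Fintype ι] [DecidableEq ι] {p : ι → Matrix (Fin d) (Fin d) ℂ}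

theorem sum_hsNorm_mul_sub_mul_sq (hsa : ∀ i, (p i)ᴴ = p i)
    (hp : CompleteOrthogonalIdempotents p) (x : Matrix (Fin d) (Fin d) ℂ) :
    ∑ j, hsNorm (p j * x - x * p j) ^ 2 =
      ∑ q : ι × ι, (if q.1 = q.2 then 0 else 2) * hsNorm (p q.1 * x * p q.2) ^ 2 := by
  simp_rw [mul_sub_mul_eq_sum_smul (R := ℂ) hp.complete,
    hsNorm_sum_smul_sq (pairwise_trace_conjTranspose_mul_eq_zero hsa hp.ortho x)]
  rw [sum_comm]
  exact sum_congr rfl fun q _ => by rw [← sum_mul, sum_norm_ite_sub_ite_sq]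

theorem inv_mul_sum_hsNorm_conj_pow_sub_sq (hsa : ∀ i, (p i)ᴴ = p i)
    (hp : CompleteOrthogonalIdempotents p) {n : ℕ} (hn : n ≠ 0) {ζ : ι → ℂ}
    (hζ : ∀ i, ζ i ^ n = 1) (hζinj : Function.Injective ζ) (x : Matrix (Fin d) (Fin d) ℂ) :
    (1 / n : ℝ) * ∑ k ∈ Icc 1 n,
        hsNorm ((∑ i, ζ i • p i) ^ k * x * star (∑ i, ζ i • p i) ^ k - x) ^ 2 =
      ∑ q : ι × ι, (if q.1 = q.2 then 0 else 2) * hsNorm (p q.1 * x * p q.2) ^ 2 := by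
  have hstar : star (∑ i, ζ i • p i) = ∑ i, conj (ζ i) • p i := by
    simp only [star_eq_conjTranspose, conjTranspose_sum, conjTranspose_smul, hsa,
      Complex.star_def]
  have hconj : ∀ k, (∑ i, ζ i • p i) ^ k * x * star (∑ i, ζ i • p i) ^ k - x =
      ∑ q : ι × ι, ((ζ q.1 * conj (ζ q.2)) ^ k - 1) • (p q.1 * x * p q.2) := fun k => by
    rw [hstar, hp.sum_smul_pow, hp.sum_smul_pow, sum_smul_mul_mul_sum_smul]
    nth_rw 2 [← sum_mul_mul_eq_self hp.complete x]
    simp only [← sum_sub_distrib, mul_pow, sub_smul, one_smul]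
  simp_rw [hconj, hsNorm_sum_smul_sq (pairwise_trace_conjTranspose_mul_eq_zero hsa hp.ortho x)]
  rw [sum_comm, mul_sum]
  refine sum_congr rfl fun q _ => ?_
  rw [← sum_mul, ← mul_assoc,
    inv_mul_sum_Icc_norm_pow_sub_one_sq hn (mul_conj_pow_eq_one (hζ _) (hζ _))]
  simp only [mul_conj_eq_one_iff (Complex.norm_eq_one_of_pow_eq_one (hζ _) hn), hζinj.eq_iff]

end Projections

theorem stmt_9 {d n : ℕ} (p : Fin n → Matrix (Fin d) (Fin d) ℂ)
    (hsa : ∀ j, (p j)ᴴ = p j)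
    (hidem : ∀ j, p j * p j = p j)
    (horth : ∀ j l, j ≠ l → p j * p l = 0)
    (hsum : ∑ j, p j = 1)
    (x : Matrix (Fin d) (Fin d) ℂ)
    (U : Matrix (Fin d) (Fin d) ℂ)
    (hU : U = ∑ j : Fin n, Complex.exp (2 * Real.pi * Complex.I * ((j : ℕ) : ℂ) / (n : ℂ)) • p j) :
    (1 / (n : ℝ)) * ∑ k ∈ Finset.Icc 1 n, hsNorm (U ^ k * x * (star U) ^ k - x) ^ 2 =
      ∑ j : Fin n, hsNorm (p j * x - x * p j) ^ 2 := by
  rcases eq_or_ne n 0 with rfl | hn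
  · simp
  have hp : CompleteOrthogonalIdempotents p := ⟨⟨hidem, horth⟩, hsum⟩
  obtain ⟨ω, hω, rfl⟩ : ∃ ω : ℂ, IsPrimitiveRoot ω n ∧ U = ∑ j : Fin n, ω ^ (j : ℕ) • p j := by
    refine ⟨_, Complex.isPrimitiveRoot_exp n hn, hU.trans (sum_congr rfl fun j _ => ?_)⟩
    rw [← Complex.exp_nat_mul]
    congr 2
    ring
  have hζ (j : Fin n) : (ω ^ (j : ℕ)) ^ n = 1 := by
    rw [pow_right_comm, hω.pow_eq_one, one_pow]
  rw [inv_mul_sum_hsNorm_conj_pow_sub_sq hsa hp hn hζ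
      (fun a b h => Fin.ext (hω.pow_inj a.isLt b.isLt h)),
    sum_hsNorm_mul_sub_mul_sq hsa hp]
end

section
/- Let X and A be finite sets, ν a symmetric probability measure on X × X with first marginal μ, and let α, ε ∈ (0,1). Let D : X × X × A × A → {0,1} satisfy D(x,x,a,b) = 1_{a=b}, and suppose ν({(x,x)}) ≥ α · μ({x}) for all x ∈ X (α-synchronicity). Let P_{x,y} be probability distributions on A × A satisfying Σ_{x,y} ν(x,y) Σ_{a,b} D(x,y,a,b) P_{x,y}(a,b) ≥ 1 − ε. Then Σ_x μ(x) Σ_a P_{x,x}(a,a) ≥ 1 − ε/α. -/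
theorem stmt_11 {X A : Type*} [Fintype X] [Fintype A] [DecidableEq A]
    (ν : X → X → ℝ) (μ : X → ℝ) (α ε : ℝ) (hα : α ∈ Set.Ioo (0:ℝ) 1) (hε : ε ∈ Set.Ioo (0:ℝ) 1)
    (hν_nonneg : ∀ x y, 0 ≤ ν x y)
    (hν_symm : ∀ x y, ν x y = ν y x)
    (hν_prob : ∑ x, ∑ y, ν x y = 1)
    (hμ : ∀ x, μ x = ∑ y, ν x y)
    (D : X → X → A → A → ℝ)
    (hD01 : ∀ x y a b, D x y a b = 0 ∨ D x y a b = 1)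
    (hD_diag : ∀ x a b, D x x a b = if a = b then 1 else 0)
    (hsync : ∀ x, ν x x ≥ α * μ x)
    (P : X → X → A → A → ℝ)
    (hP_nonneg : ∀ x y a b, 0 ≤ P x y a b)
    (hP_prob : ∀ x y, ∑ a, ∑ b, P x y a b = 1)
    (hval : ∑ x, ∑ y, ν x y * ∑ a, ∑ b, D x y a b * P x y a b ≥ 1 - ε) :
    ∑ x, μ x * ∑ a, P x x a a ≥ 1 - ε / α := by
  obtain ⟨hα0, hα1⟩ := hα
  set T : X → X → ℝ := fun x y => ∑ a, ∑ b, D x y a b * P x y a b with hT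
  have hT_le : ∀ x y, T x y ≤ 1 := by
    intro x y
    rw [← hP_prob x y]
    apply Finset.sum_le_sum; intro a _
    apply Finset.sum_le_sum; intro b _
    rcases hD01 x y a b with h | h <;> simp [h, hP_nonneg x y a b]
  have hS_le : ∀ x, ∑ a, P x x a a ≤ 1 := by
    intro x
    rw [← hP_prob x x]
    apply Finset.sum_le_sum; intro a _
    exact Finset.single_le_sum (fun b _ => hP_nonneg x x a b) (Finset.mem_univ a)
  have hTxx : ∀ x, T x x = ∑ a, P x x a a := by
    intro x
    simp only [hT]
    congr 1; funext a
    rw [Finset.sum_congr rfl (fun b _ => by rw [hD_diag])]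
    simp
  -- diagonal loss ≤ ε
  have hloss : ∑ x, ν x x * (1 - ∑ a, P x x a a) ≤ ε := by
    have h1 : ∑ x, ∑ y, ν x y * (1 - T x y) ≤ ε := by
      have : ∑ x, ∑ y, ν x y * (1 - T x y)
          = (∑ x, ∑ y, ν x y) - ∑ x, ∑ y, ν x y * T x y := by
        rw [← Finset.sum_sub_distrib]
        congr 1; funext x
        rw [← Finset.sum_sub_distrib]
        congr 1; funext y; ring
      rw [this, hν_prob]
      linarith [hval]
    refine le_trans ?_ h1
    refine Finset.sum_le_sum fun x _ => ?_
    rw [← hTxx x]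
    exact Finset.single_le_sum (f := fun y => ν x y * (1 - T x y))
      (fun y _ => mul_nonneg (hν_nonneg x y) (by linarith [hT_le x y])) (Finset.mem_univ x)
  have hstep : ∑ x, α * μ x * (1 - ∑ a, P x x a a) ≤ ε := by
    refine le_trans ?_ hloss
    refine Finset.sum_le_sum fun x _ => ?_
    exact mul_le_mul_of_nonneg_right (hsync x) (by linarith [hS_le x])
  have hμsum : ∑ x, μ x = 1 := by
    rw [Finset.sum_congr rfl (fun x _ => hμ x), hν_prob]
  have hexp : ∑ x, α * μ x * (1 - ∑ a, P x x a a)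
      = α * (1 - ∑ x, μ x * ∑ a, P x x a a) := by
    have h : ∀ x : X, α * μ x * (1 - ∑ a, P x x a a)
        = α * μ x - α * (μ x * ∑ a, P x x a a) := fun x => by ring
    rw [Finset.sum_congr rfl fun x _ => h x, Finset.sum_sub_distrib,
      ← Finset.mul_sum, ← Finset.mul_sum, hμsum]
    ring
  rw [hexp] at hstep
  have h2 : 1 - ∑ x, μ x * ∑ a, P x x a a ≤ ε / α := by
    rw [le_div_iff₀ hα0]
    linarith [mul_comm α (1 - ∑ x, μ x * ∑ a, P x x a a)]
  linarith
end

section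
/- Let ρ be a σ-finite Borel measure on [0,1] × (0,∞) satisfying the scaling relation ρ(B × e^{s}C) = e^{s} ρ(B × C) for every s ∈ ℝ, Borel B ⊆ [0,1], and Borel C ⊆ (0,∞), and which is finite on [0,1] × [a,b] for all 0 < a < b. Then there exists a finite Borel measure μ on [0,1] such that ρ = μ ⊗ Leb, where Leb is Lebesgue measure on (0,∞). -/
/-!
Fix a Borel set `B ⊆ [0,1]` and look at the slice measure `ν C = ρ (B × C)` on `(0,∞)`.
Scaling makes `G u = ν (1,u]` satisfy `G (u v) = G u + u G v`; comparing `G (2u)` with `G (u 2)`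
gives `G u = (u - 1) G 2`, so `ν` is `G 2` times Lebesgue measure. Hence `ρ` agrees with
`μ ⊗ Leb` on rectangles, where `μ B = ρ (B × (1,2])`.
-/

open MeasureTheory Set

open scoped ENNReal

namespace MeasureTheory.Measure

lemma measure_Ioc_zero_eq_of_forall_pos {ν ν' : Measure ℝ}
    (h : ∀ a b, 0 < a → ν (Ioc a b) = ν' (Ioc a b)) (b : ℝ) :
    ν (Ioc 0 b) = ν' (Ioc 0 b) := by
  have hunion : Ioc 0 b = ⋃ n : ℕ, Ioc (1 / (n + 1 : ℝ)) b := by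
    ext x
    simp only [mem_Ioc, mem_iUnion]
    exact ⟨fun ⟨hx, hxb⟩ => (exists_nat_one_div_lt hx).imp fun _ hn => ⟨hn, hxb⟩,
      fun ⟨_, hn, hxb⟩ => ⟨Nat.one_div_pos_of_nat.trans hn, hxb⟩⟩
  have hmono : Monotone fun n : ℕ => Ioc (1 / (n + 1 : ℝ)) b :=
    fun _ _ hmn => Ioc_subset_Ioc_left (Nat.one_div_le_one_div hmn)
  simp only [hunion, hmono.measure_iUnion, h _ _ Nat.one_div_pos_of_nat]

lemma ext_of_Ioc_pos {ν ν' : Measure ℝ} (h0 : ν (Iic 0) = 0) (h0' : ν' (Iic 0) = 0)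
    (hfin : ∀ a b, ν' (Ioc a b) ≠ ∞) (h : ∀ a b, 0 < a → ν (Ioc a b) = ν' (Ioc a b)) :
    ν = ν' := by
  have hpos (μ : Measure ℝ) (hμ : μ (Iic 0) = 0) (a b : ℝ) :
      μ (Ioc a b) = μ (Ioc (max a 0) b) := by
    rw [← Ioc_inter_Ioi, measure_inter_conull (by rwa [compl_Ioi])]
  refine (ext_of_Ioc' ν' ν (fun a b _ => hfin a b) fun a b _ => ?_).symm
  rw [hpos ν h0, hpos ν' h0']
  rcases (le_max_right a 0).lt_or_eq with ha | ha
  · exact (h _ _ ha).symm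
  · rw [← ha]
    exact (measure_Ioc_zero_eq_of_forall_pos h b).symm

section Scaling

variable {ν : Measure ℝ}
  (hscale : ∀ k a b : ℝ, 0 < k → 0 < a →
    ν (Ioc (k * a) (k * b)) = .ofReal k * ν (Ioc a b))
include hscale

lemma measure_Ioc_one_mul_of_scaling {u v : ℝ} (hu : 1 ≤ u) (hv : 1 ≤ v) :
    ν (Ioc 1 (u * v)) = ν (Ioc 1 u) + .ofReal u * ν (Ioc 1 v) := by
  have hu0 : 0 < u := one_pos.trans_le hu
  rw [← Ioc_union_Ioc_eq_Ioc hu (le_mul_of_one_le_right hu0.le hv),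
    measure_union (Ioc_disjoint_Ioc_of_le le_rfl) measurableSet_Ioc,
    ← hscale u 1 v hu0 one_pos, mul_one]

lemma measure_Ioc_one_of_scaling (hfin : ∀ a b, 0 < a → ν (Ioc a b) ≠ ∞) {u : ℝ}
    (hu : 1 ≤ u) : ν (Ioc 1 u) = .ofReal (u - 1) * ν (Ioc 1 2) := by
  have hsym := measure_Ioc_one_mul_of_scaling hscale hu one_le_two
  rw [mul_comm, measure_Ioc_one_mul_of_scaling hscale one_le_two hu] at hsym
  have hu' : ENNReal.ofReal u = .ofReal (u - 1) + 1 := by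
    rw [← ENNReal.ofReal_one, ← ENNReal.ofReal_add (by linarith) zero_le_one, sub_add_cancel]
  rw [ENNReal.ofReal_ofNat, two_mul, hu', add_mul, one_mul, add_comm, ← add_assoc,
    ENNReal.add_left_inj (hfin 1 2 one_pos), ENNReal.add_right_inj (hfin 1 u one_pos)] at hsym
  exact hsym

lemma measure_Ioc_of_scaling (hfin : ∀ a b, 0 < a → ν (Ioc a b) ≠ ∞) {a : ℝ} (ha : 0 < a)
    (b : ℝ) : ν (Ioc a b) = .ofReal (b - a) * ν (Ioc 1 2) := by
  rcases le_or_gt b a with hba | hab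
  · simp [Ioc_eq_empty hba.not_gt, ENNReal.ofReal_of_nonpos (sub_nonpos.2 hba)]
  · have h := hscale a 1 (b / a) ha one_pos
    rw [mul_one, mul_div_cancel₀ _ ha.ne'] at h
    rw [h, measure_Ioc_one_of_scaling hscale hfin ((one_le_div ha).2 hab.le), ← mul_assoc,
      ← ENNReal.ofReal_mul ha.le, mul_sub, mul_one, mul_div_cancel₀ _ ha.ne']

theorem eq_smul_volume_restrict_Ioi_of_scaling (h0 : ν (Iic 0) = 0)
    (hfin : ∀ a b, 0 < a → ν (Ioc a b) ≠ ∞) :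
    ν = ν (Ioc 1 2) • volume.restrict (Ioi 0) := by
  refine ext_of_Ioc_pos h0 ?_ (fun a b => ?_) fun a b ha => ?_
  · simp [restrict_apply measurableSet_Iic, Iic_inter_Ioi]
  · rw [smul_apply, smul_eq_mul, restrict_apply measurableSet_Ioc]
    exact ENNReal.mul_ne_top (hfin 1 2 one_pos)
      ((measure_mono inter_subset_left).trans_lt measure_Ioc_lt_top).ne
  · rw [measure_Ioc_of_scaling hscale hfin ha, smul_apply, restrict_apply measurableSet_Ioc,
      Ioc_inter_Ioi, max_eq_left ha.le, Real.volume_Ioc, smul_eq_mul, mul_comm]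

end Scaling

variable {α β : Type*} [MeasurableSpace α] [MeasurableSpace β]

lemma fst_restrict_univ_prod_apply (ρ : Measure (α × β)) (T : Set β) {s : Set α}
    (hs : MeasurableSet s) : (ρ.restrict (univ ×ˢ T)).fst s = ρ (s ×ˢ T) := by
  rw [fst_apply hs, restrict_apply (measurable_fst hs), ← prod_univ, prod_inter_prod,
    inter_univ, univ_inter]

lemma snd_restrict_prod_univ_apply (ρ : Measure (α × β)) (S : Set α) {t : Set β}
    (ht : MeasurableSet t) : (ρ.restrict (S ×ˢ univ)).snd t = ρ (S ×ˢ t) := by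
  rw [snd_apply ht, restrict_apply (measurable_snd ht), ← univ_prod, prod_inter_prod,
    inter_univ, univ_inter]

end MeasureTheory.Measure

open Measure

section SupportedOnStrip

variable {ρ : Measure (ℝ × ℝ)} (hsupp : ρ ((Icc (0:ℝ) 1 ×ˢ Ioi (0:ℝ))ᶜ) = 0)
include hsupp

lemma measure_prod_eq_inter_Icc_prod_inter_Ioi (s t : Set ℝ) :
    ρ (s ×ˢ t) = ρ ((s ∩ Icc 0 1) ×ˢ (t ∩ Ioi 0)) := by
  rw [← prod_inter_prod, measure_inter_conull hsupp]

lemma measure_prod_eq_inter_Icc_prod (s t : Set ℝ) :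
    ρ (s ×ˢ t) = ρ ((s ∩ Icc 0 1) ×ˢ t) := by
  rw [measure_prod_eq_inter_Icc_prod_inter_Ioi hsupp s t,
    measure_prod_eq_inter_Icc_prod_inter_Ioi hsupp (s ∩ Icc 0 1) t, inter_assoc, inter_self]

lemma snd_restrict_prod_univ_eq_smul_volume
    (hscale : ∀ (s : ℝ) (B C : Set ℝ), MeasurableSet B → MeasurableSet C →
      B ⊆ Icc (0:ℝ) 1 → C ⊆ Ioi (0:ℝ) →
      ρ (B ×ˢ ((fun r => Real.exp s * r) '' C)) = ENNReal.ofReal (Real.exp s) * ρ (B ×ˢ C))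
    (hfin : ∀ a b : ℝ, 0 < a → a < b → ρ (Icc (0:ℝ) 1 ×ˢ Icc a b) < ⊤)
    {B : Set ℝ} (hB : MeasurableSet B) (hBs : B ⊆ Icc 0 1) :
    (ρ.restrict (B ×ˢ univ)).snd = ρ (B ×ˢ Ioc 1 2) • volume.restrict (Ioi 0) := by
  rw [← snd_restrict_prod_univ_apply ρ B measurableSet_Ioc]
  refine eq_smul_volume_restrict_Ioi_of_scaling (fun k a b hk ha => ?_) ?_ fun a b ha => ?_ <;>
    simp only [snd_restrict_prod_univ_apply ρ B measurableSet_Ioc,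
      snd_restrict_prod_univ_apply ρ B measurableSet_Iic]
  · have h := hscale (Real.log k) B (Ioc a b) hB measurableSet_Ioc hBs
      (Ioc_subset_Ioi_self.trans (Ioi_subset_Ioi ha.le))
    rwa [Real.exp_log hk, image_mul_left_Ioc hk] at h
  · simp [measure_prod_eq_inter_Icc_prod_inter_Ioi hsupp B, Iic_inter_Ioi]
  · have hsub : B ×ˢ Ioc a b ⊆ Icc 0 1 ×ˢ Icc a (max a b + 1) :=
      prod_mono hBs <| Ioc_subset_Icc_self.trans <|
        Icc_subset_Icc_right (by linarith [le_max_right a b])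
    exact ((measure_mono hsub).trans_lt (hfin _ _ ha (by linarith [le_max_left a b]))).ne

end SupportedOnStrip

theorem stmt_14_general (ρ : Measure (ℝ × ℝ))
    (hsupp : ρ ((Icc (0:ℝ) 1 ×ˢ Ioi (0:ℝ))ᶜ) = 0)
    (hscale : ∀ (s : ℝ) (B C : Set ℝ), MeasurableSet B → MeasurableSet C →
      B ⊆ Icc (0:ℝ) 1 → C ⊆ Ioi (0:ℝ) →
      ρ (B ×ˢ ((fun r => Real.exp s * r) '' C)) = ENNReal.ofReal (Real.exp s) * ρ (B ×ˢ C))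
    (hfin : ∀ a b : ℝ, 0 < a → a < b → ρ (Icc (0:ℝ) 1 ×ˢ Icc a b) < ⊤) :
    ∃ μ : Measure ℝ, IsFiniteMeasure μ ∧ μ ((Icc (0:ℝ) 1)ᶜ) = 0 ∧
      ρ = μ.prod (volume.restrict (Ioi (0:ℝ))) := by
  set μ := (ρ.restrict (univ ×ˢ Ioc (1:ℝ) 2)).fst
  have hμ (s : Set ℝ) (hs : MeasurableSet s) : μ s = ρ (s ×ˢ Ioc 1 2) :=
    fst_restrict_univ_prod_apply ρ _ hs
  have hμfin : IsFiniteMeasure μ := by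
    refine ⟨?_⟩
    rw [hμ univ MeasurableSet.univ, measure_prod_eq_inter_Icc_prod hsupp, univ_inter]
    exact (measure_mono (prod_mono_right Ioc_subset_Icc_self)).trans_lt
      (hfin 1 2 one_pos one_lt_two)
  refine ⟨μ, hμfin, ?_, (Measure.prod_eq fun s t hs ht => ?_).symm⟩
  · rw [hμ _ measurableSet_Icc.compl, measure_prod_eq_inter_Icc_prod hsupp, compl_inter_self,
      empty_prod, measure_empty]
  · rw [hμ s hs, measure_prod_eq_inter_Icc_prod hsupp s, measure_prod_eq_inter_Icc_prod hsupp s,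
      ← snd_restrict_prod_univ_apply ρ _ ht, snd_restrict_prod_univ_eq_smul_volume hsupp hscale
      hfin (hs.inter measurableSet_Icc) inter_subset_right, Measure.smul_apply, smul_eq_mul]

theorem stmt_14 (ρ : Measure (ℝ × ℝ)) [SigmaFinite ρ]
    (hsupp : ρ ((Icc (0:ℝ) 1 ×ˢ Ioi (0:ℝ))ᶜ) = 0)
    (hscale : ∀ (s : ℝ) (B C : Set ℝ), MeasurableSet B → MeasurableSet C →
      B ⊆ Icc (0:ℝ) 1 → C ⊆ Ioi (0:ℝ) →
      ρ (B ×ˢ ((fun r => Real.exp s * r) '' C)) = ENNReal.ofReal (Real.exp s) * ρ (B ×ˢ C))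
    (hfin : ∀ a b : ℝ, 0 < a → a < b → ρ (Icc (0:ℝ) 1 ×ˢ Icc a b) < ⊤) :
    ∃ μ : Measure ℝ, IsFiniteMeasure μ ∧ μ ((Icc (0:ℝ) 1)ᶜ) = 0 ∧
      ρ = μ.prod (volume.restrict (Ioi (0:ℝ))) :=
  stmt_14_general ρ hsupp hscale hfin
end
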